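/- Let (Z,ρ) be a compact metric space, let f,g: Z → Z be continuous maps, and let θ > 0. Assume: f is Lipschitz continuous with Lipschitz constant L > 1; (f,K_f,θ) and (g,K_g,θ) both satisfy condition (E) for nonempty compact sets K_f, K_g ⊆ Z with f(K_f) = K_f, f⁻¹(K_f) = K_f, g(K_g) = K_g, and g⁻¹(K_g) = K_g; the Hausdorff distance between K_f and K_g is less than θ/4; and sup_{z ∈ Z} ρ(f(z), g(z)) ≤ θ/3. Then there exists a unique continuous map h: K_f → K_g such that g∘h = h∘f on K_f and ρ(h(z), z) ≤ θ/2 for all z ∈ K_f. Moreover, this h is a homeomorphism of K_f onto K_g, and h is Hölder continuous with exponent log 2 / log L and a Hölder constant depending only on θ, L and the diameter of Z (in particular, independent of g). -/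

import Mathlib

/-!
Condition (E) provides inverse branches of `g` near `K` that contract distances by `1/2`.
Pulling a `θ/3`-pseudo-orbit near `K` back along them from time `n` gives a point of `K` whose
orbit `θ/3`-shadows it up to time `n`, and a limit point of these (`K` is compact) shadows it
forever; since `g` doubles small distances near `K`, at most one point `θ/2`-shadows it.
Sending `z ∈ K_f` to the point whose `g`-orbit shadows the `f`-orbit of `z` defines `h`.
Uniqueness of shadowing gives `g ∘ h = h ∘ f`, uniqueness of `h`, and (with the roles of `f` and
`g` exchanged) surjectivity; expansion of `f` gives injectivity. If `L ^ n * ρ(x, y) ≤ θ/3`, the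
`g`-orbits of `h x` and `h y` stay `θ`-close for `n` steps, so `2 ^ n * ρ(h x, h y) ≤ θ`; the
largest such `n` yields the exponent `log 2 / log L`.
-/

/-- Condition (E): for every `x` in the closed `θ`-neighborhood of `K` and every `y`
with `ρ(x,y) ≤ θ`, one has `ρ(g(x),g(y)) ≥ 2ρ(x,y)`; moreover `g` is injective on
`B(x,θ)` and `g(B(x,θ)) ⊇ B(g(x),2θ)`. -/
def CondE {Z : Type*} [MetricSpace Z] (g : Z → Z) (K : Set Z) (θ : ℝ) : Prop :=
  ∀ x : Z, Metric.infDist x K ≤ θ →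
    (∀ y : Z, dist x y ≤ θ → 2 * dist x y ≤ dist (g x) (g y)) ∧
    Set.InjOn g (Metric.ball x θ) ∧
    Metric.ball (g x) (2 * θ) ⊆ g '' Metric.ball x θ

open Metric Set Filter Topology

lemma nonpos_of_forall_pow_mul_le {r e b : ℝ} (hr : 1 < r) (h : ∀ n : ℕ, r ^ n * e ≤ b) :
    e ≤ 0 := by
  by_contra! he
  obtain ⟨n, hn⟩ := pow_unbounded_of_one_lt (b / e) hr
  exact (h n).not_gt (by rwa [div_lt_iff₀ he] at hn)

lemma le_div_rpow_mul_rpow_of_forall_pow_mul_le {L a b c d e : ℝ} (hL : 1 < L) (ha : 0 < a)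
    (hd : 0 ≤ d) (he : 0 ≤ e) (hec : e ≤ c) (hbc : 2 * b ≤ c)
    (h : ∀ n : ℕ, L ^ n * d ≤ a → 2 ^ n * e ≤ b) :
    e ≤ c / a ^ Real.logb L 2 * d ^ Real.logb L 2 := by
  set α := Real.logb L 2
  have hα : 0 < α := Real.logb_pos hL one_lt_two
  have hc : 0 ≤ c := he.trans hec
  rcases hd.eq_or_lt with rfl | hd
  · refine (nonpos_of_forall_pow_mul_le one_lt_two fun n => h n ?_).trans ?_
    · simpa using ha.le
    · rw [Real.zero_rpow hα.ne', mul_zero]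
  rcases le_or_gt d a with hda | had
  · obtain ⟨n, hn, hn₁⟩ := exists_nat_pow_near ((one_le_div hd).2 hda) hL
    have hscale : (a / d) ^ α < 2 ^ (n + 1) := by
      calc (a / d) ^ α < (L ^ (n + 1)) ^ α := by gcongr
        _ = 2 ^ (n + 1) := by
          rw [← Real.rpow_pow_comm (by linarith), Real.rpow_logb (by linarith) hL.ne' two_pos]
    have hn' : 2 ^ n * e ≤ b := h n (by rwa [← le_div_iff₀ hd])
    calc e ≤ c / 2 ^ (n + 1) := by
          rw [le_div_iff₀ (by positivity), pow_succ]; linarith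
      _ ≤ c / (a / d) ^ α := by gcongr
      _ = c / a ^ α * d ^ α := by
          rw [Real.div_rpow ha.le hd.le]; field_simp
  · calc e ≤ c := hec
      _ ≤ c / a ^ α * d ^ α := by
        rw [div_mul_eq_mul_div, le_div_iff₀ (by positivity)]
        gcongr

lemma continuousOn_of_dist_le_mul_rpow {X Y : Type*} [PseudoMetricSpace X] [PseudoMetricSpace Y]
    {h : X → Y} {s : Set X} {C α : ℝ} (hα : 0 < α)
    (hh : ∀ x ∈ s, ∀ y ∈ s, dist (h x) (h y) ≤ C * dist x y ^ α) : ContinuousOn h s := by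
  intro x hx
  rw [ContinuousWithinAt, tendsto_iff_dist_tendsto_zero]
  refine squeeze_zero' (.of_forall fun _ => dist_nonneg)
    (eventually_nhdsWithin_of_forall fun y hy => hh y hy x hx) ?_
  have : Tendsto (fun y => C * dist y x ^ α) (𝓝[s] x) (𝓝 (C * dist x x ^ α)) :=
    ((continuous_id.dist continuous_const).rpow_const fun _ => Or.inr hα.le).const_mul C
      |>.continuousWithinAt
  rwa [dist_self, Real.zero_rpow hα.ne', mul_zero] at this

lemma dist_iterate_le_pow_mul {X : Type*} [PseudoMetricSpace X] {f : X → X} {L : ℝ}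
    (hL : 0 ≤ L) (hf : ∀ x y, dist (f x) (f y) ≤ L * dist x y) (n : ℕ) (x y : X) :
    dist (f^[n] x) (f^[n] y) ≤ L ^ n * dist x y := by
  have hf' : LipschitzWith L.toNNReal f :=
    .of_dist_le_mul fun x y => by rw [Real.coe_toNNReal L hL]; exact hf x y
  simpa [Real.coe_toNNReal L hL] using (hf'.iterate n).dist_le_mul x y

lemma Set.MapsTo.iterate_semiconj_apply {X : Type*} {f g h : X → X} {s : Set X}
    (hf : MapsTo f s s) (hs : ∀ z ∈ s, g (h z) = h (f z)) (n : ℕ) {z : X} (hz : z ∈ s) :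
    g^[n] (h z) = h (f^[n] z) := by
  induction n with
  | zero => rfl
  | succ n ih =>
    rw [Function.iterate_succ_apply', ih, Function.iterate_succ_apply', hs _ (hf.iterate n hz)]

lemma Metric.infDist_lt_of_hausdorffDist_lt {X : Type*} [PseudoMetricSpace X] {s t : Set X}
    {r : ℝ} {x : X} (hs : Bornology.IsBounded s) (ht : Bornology.IsBounded t) (hs₀ : s.Nonempty)
    (ht₀ : t.Nonempty)    (h : hausdorffDist s t < r) (hx : x ∈ s) : infDist x t < r :=
  (infDist_le_hausdorffDist_of_mem hx
    (hausdorffEDist_ne_top_of_nonempty_of_bounded hs₀ ht₀ hs ht)).trans_lt h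

section Shadowing

variable {Z : Type*} [MetricSpace Z]

def Shadows (g : Z → Z) (ε : ℝ) (u : ℕ → Z) (w : Z) : Prop :=
  ∀ k : ℕ, dist (g^[k] w) (u k) ≤ ε

namespace Shadows

variable {g : Z → Z} {ε ε' : ℝ} {u : ℕ → Z} {w : Z}

lemma mono (hw : Shadows g ε u w) (hε : ε ≤ ε') : Shadows g ε' u w :=
  fun k => (hw k).trans hε

lemma tail (hw : Shadows g ε u w) : Shadows g ε (fun k => u (k + 1)) (g w) :=
  fun k => hw (k + 1)

end Shadows

namespace CondE

variable {g : Z → Z} {K : Set Z} {θ ε : ℝ} {u : ℕ → Z}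

lemma exists_preimage_near (hE : CondE g K θ) {x y : Z} (hx : infDist x K ≤ θ)
    (hy : dist (g x) y < 2 * θ) : ∃ x', g x' = y ∧ dist x x' ≤ dist (g x) y / 2 := by
  obtain ⟨hexp, -, hsurj⟩ := hE x hx
  obtain ⟨x', hx', rfl⟩ := hsurj (by rwa [mem_ball, dist_comm])
  have := hexp x' (by rw [dist_comm]; exact (mem_ball.mp hx').le)
  exact ⟨x', rfl, by linarith⟩

lemma two_pow_mul_dist_le_dist_iterate (hE : CondE g K θ) {x y : Z} :
    ∀ {n : ℕ}, (∀ k < n, infDist (g^[k] x) K ≤ θ ∧ dist (g^[k] x) (g^[k] y) ≤ θ) →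
      2 ^ n * dist x y ≤ dist (g^[n] x) (g^[n] y)
  | 0, _ => by simp
  | n + 1, h => by
    have ih := two_pow_mul_dist_le_dist_iterate hE fun k hk => h k (hk.trans n.lt_succ_self)
    obtain ⟨hnK, hn⟩ := h n n.lt_succ_self
    rw [Function.iterate_succ_apply', Function.iterate_succ_apply', pow_succ']
    calc 2 * 2 ^ n * dist x y ≤ 2 * dist (g^[n] x) (g^[n] y) := by linarith
      _ ≤ _ := (hE _ hnK).1 _ hn

lemma eq_of_forall_iterate {x y : Z} (hE : CondE g K θ)
    (h : ∀ k, infDist (g^[k] x) K ≤ θ ∧ dist (g^[k] x) (g^[k] y) ≤ θ) : x = y := by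
  refine dist_le_zero.mp (nonpos_of_forall_pow_mul_le (b := θ) one_lt_two fun n => ?_)
  exact (hE.two_pow_mul_dist_le_dist_iterate fun k _ => h k).trans (h n).2

lemma eq_of_shadows (hE : CondE g K θ) (hu : ∀ k, infDist (u k) K ≤ θ / 2) {w w' : Z}
    (hw : Shadows g (θ / 2) u w) (hw' : Shadows g (θ / 2) u w') : w = w' := by
  refine hE.eq_of_forall_iterate fun k => ⟨?_, ?_⟩
  · linarith [infDist_le_infDist_add_dist (x := g^[k] w) (y := u k) (s := K), hu k, hw k]
  · linarith [dist_triangle_right (g^[k] w) (g^[k] w') (u k), hw k, hw' k]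

lemma exists_shadows_up_to (hE : CondE g K θ) (hpre : g ⁻¹' K ⊆ K) (hεθ : ε < θ)
    (hu : ∀ k, infDist (u k) K ≤ θ) (hpseudo : ∀ k, dist (g (u k)) (u (k + 1)) ≤ ε) :
    ∀ n, ∀ p ∈ K, dist (u n) p ≤ ε →
      ∃ w ∈ K, g^[n] w = p ∧ ∀ k ≤ n, dist (g^[k] w) (u k) ≤ ε
  | 0, p, hp, hup => ⟨p, hp, rfl, fun k hk => by
      obtain rfl := Nat.le_zero.mp hk; rwa [dist_comm]⟩
  | n + 1, p, hp, hup => by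
    have hgp : dist (g (u n)) p ≤ 2 * ε := by
      linarith [dist_triangle (g (u n)) (u (n + 1)) p, hpseudo n]
    obtain ⟨q, rfl, hq⟩ := hE.exists_preimage_near (hu n) (by linarith)
    obtain ⟨w, hwK, rfl, hw⟩ :=
      exists_shadows_up_to hE hpre hεθ hu hpseudo n q (hpre hp) (by linarith)
    refine ⟨w, hwK, Function.iterate_succ_apply' g n w, fun k hk => ?_⟩
    rcases hk.lt_or_eq with hk | rfl
    · exact hw k (Nat.lt_succ_iff.mp hk)
    · rw [Function.iterate_succ_apply', dist_comm]; exact hup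

theorem exists_mem_shadows (hg : Continuous g) (hK : IsCompact K) (hK₀ : K.Nonempty)
    (hE : CondE g K θ) (hpre : g ⁻¹' K ⊆ K) (hεθ : ε < θ)
    (hu : ∀ k, infDist (u k) K < ε) (hpseudo : ∀ k, dist (g (u k)) (u (k + 1)) ≤ ε) :
    ∃ w ∈ K, Shadows g ε u w := by
  have hp : ∀ n, ∃ p ∈ K, dist (u n) p < ε := fun n => (infDist_lt_iff hK₀).mp (hu n)
  choose p hpK hp using hp
  have hw : ∀ n, ∃ w ∈ K, ∀ k ≤ n, dist (g^[k] w) (u k) ≤ ε := fun n =>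
    let ⟨w, hwK, _, hw⟩ := hE.exists_shadows_up_to hpre hεθ
      (fun k => (hu k).le.trans hεθ.le) hpseudo n (p n) (hpK n) (hp n).le
    ⟨w, hwK, hw⟩
  choose w hwK hw using hw
  obtain ⟨w₀, hw₀K, φ, hφ, hlim⟩ := hK.tendsto_subseq hwK
  refine ⟨w₀, hw₀K, fun k => le_of_tendsto
    ((((hg.iterate k).tendsto w₀).comp hlim).dist tendsto_const_nhds) ?_⟩
  filter_upwards [eventually_ge_atTop k] with i hi
  exact hw (φ i) k (hi.trans (hφ.id_le i))

lemma exists_mem_shadows_orbit {f : Z → Z} {z : Z} (hg : Continuous g) (hK : IsCompact K)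
    (hK₀ : K.Nonempty) (hE : CondE g K θ) (hpre : g ⁻¹' K ⊆ K) (hεθ : ε < θ)
    (hz : ∀ k, infDist (f^[k] z) K < ε) (hfg : ∀ y, dist (g y) (f y) ≤ ε) :
    ∃ w ∈ K, Shadows g ε (f^[·] z) w :=
  hE.exists_mem_shadows hg hK hK₀ hpre hεθ hz fun k => by
    rw [Function.iterate_succ_apply']; exact hfg _

lemma two_pow_mul_dist_le_of_shadows (hE : CondE g K θ) (hgK : MapsTo g K K) {v : ℕ → Z}
    {w w' : Z} {n : ℕ} (hw : w ∈ K) (hwu : Shadows g (θ / 3) u w)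
    (hw'v : Shadows g (θ / 3) v w')
    (huv : ∀ k ≤ n, dist (u k) (v k) ≤ θ / 3) : 2 ^ n * dist w w' ≤ θ := by
  have hclose : ∀ k ≤ n, dist (g^[k] w) (g^[k] w') ≤ θ := fun k hk => by
    linarith [dist_triangle4 (g^[k] w) (u k) (v k) (g^[k] w'), hwu k, hw'v k, huv k hk,
      dist_comm (v k) (g^[k] w')]
  refine (hE.two_pow_mul_dist_le_dist_iterate fun k hk => ⟨?_, hclose k hk.le⟩).trans
    (hclose n le_rfl)
  rw [infDist_zero_of_mem (hgK.iterate k hw)]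
  linarith [hclose k hk.le, dist_nonneg (x := g^[k] w) (y := g^[k] w')]

end CondE

section Conjugacy

variable {f g h : Z → Z} {Kf Kg : Set Z} {θ : ℝ}

lemma semiconj_of_shadows (hEg : CondE g Kg θ) (hfK : MapsTo f Kf Kf)
    (hnear : ∀ z ∈ Kf, infDist z Kg ≤ θ / 2)
    (hh : ∀ z ∈ Kf, Shadows g (θ / 2) (f^[·] z) (h z)) {z : Z} (hz : z ∈ Kf) :
    g (h z) = h (f z) :=
  hEg.eq_of_shadows (fun k => hnear _ (hfK.iterate k (hfK hz))) (hh z hz).tail (hh _ (hfK hz))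

lemma eqOn_of_semiconj (hEg : CondE g Kg θ) (hfK : MapsTo f Kf Kf)
    (hnear : ∀ z ∈ Kf, infDist z Kg ≤ θ / 2)
    (hh : ∀ z ∈ Kf, Shadows g (θ / 2) (f^[·] z) (h z)) {h' : Z → Z}
    (hsemi' : ∀ z ∈ Kf, g (h' z) = h' (f z)) (hdist' : ∀ z ∈ Kf, dist (h' z) z ≤ θ / 2) :
    EqOn h' h Kf := fun z hz =>
  hEg.eq_of_shadows (fun k => hnear _ (hfK.iterate k hz))
    (fun k => by rw [hfK.iterate_semiconj_apply hsemi' k hz]; exact hdist' _ (hfK.iterate k hz))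
    (hh z hz)

lemma injOn_of_shadows (hEf : CondE f Kf θ) (hfK : MapsTo f Kf Kf)
    (hh : ∀ z ∈ Kf, Shadows g (θ / 2) (f^[·] z) (h z)) : InjOn h Kf := by
  intro x hx y hy hxy
  refine hEf.eq_of_forall_iterate fun k => ⟨?_, ?_⟩
  · rw [infDist_zero_of_mem (hfK.iterate k hx)]
    linarith [dist_nonneg.trans (hh x hx k)]
  · have hxk := dist_triangle_left (f^[k] x) (f^[k] y) (g^[k] (h x))
    have hx' := hh x hx k
    rw [hxy] at hxk hx'
    linarith [hh y hy k]

lemma surjOn_of_shadows (hθ : 0 < θ) (hf : Continuous f) (hKf : IsCompact Kf)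
    (hKf₀ : Kf.Nonempty) (hEf : CondE f Kf θ) (hEg : CondE g Kg θ) (hfpre : f ⁻¹' Kf ⊆ Kf)
    (hfK : MapsTo f Kf Kf) (hgK : MapsTo g Kg Kg) (hnearKg : ∀ z ∈ Kf, infDist z Kg ≤ θ / 2)
    (hnearKf : ∀ w ∈ Kg, infDist w Kf < θ / 3) (hfg : ∀ z, dist (f z) (g z) ≤ θ / 3)
    (hh : ∀ z ∈ Kf, Shadows g (θ / 2) (f^[·] z) (h z)) : SurjOn h Kf Kg := by
  intro w hw
  obtain ⟨z, hz, hzw⟩ := hEf.exists_mem_shadows_orbit hf hKf hKf₀ hfpre (by linarith)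
    (fun k => hnearKf _ (hgK.iterate k hw)) hfg
  refine ⟨z, hz, hEg.eq_of_shadows (fun k => hnearKg _ (hfK.iterate k hz)) (hh z hz) ?_⟩
  exact fun k => (dist_comm _ _).trans_le ((hzw k).trans (by linarith))

lemma dist_le_mul_rpow_of_shadows [BoundedSpace Z] {L : ℝ} (hθ : 0 < θ) (hL : 1 < L)
    (hLip : ∀ x y, dist (f x) (f y) ≤ L * dist x y) (hEg : CondE g Kg θ)
    (hgK : MapsTo g Kg Kg) (hhK : MapsTo h Kf Kg)
    (hh : ∀ z ∈ Kf, Shadows g (θ / 3) (f^[·] z) (h z)) {x y : Z} (hx : x ∈ Kf)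
    (hy : y ∈ Kf) :
    dist (h x) (h y) ≤
      (2 * θ + diam (univ : Set Z)) / (θ / 3) ^ Real.logb L 2 * dist x y ^ Real.logb L 2 := by
  have hbound : dist (h x) (h y) ≤ 2 * θ + diam (univ : Set Z) := by
    have hxy := dist_le_diam_of_mem (Bornology.isBounded_univ.mpr ‹_›) (mem_univ x) (mem_univ y)
    have hx0 : dist (h x) x ≤ θ / 3 := hh x hx 0
    have hy0 : dist (h y) y ≤ θ / 3 := hh y hy 0
    linarith [dist_triangle4 (h x) x y (h y), dist_comm y (h y)]
  refine le_div_rpow_mul_rpow_of_forall_pow_mul_le (b := θ) hL (by positivity) dist_nonneg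
    dist_nonneg hbound (by linarith [diam_nonneg (s := (univ : Set Z))]) fun n hn => ?_
  refine hEg.two_pow_mul_dist_le_of_shadows hgK (hhK hx) (hh x hx) (hh y hy) fun k hk => ?_
  calc dist (f^[k] x) (f^[k] y) ≤ L ^ k * dist x y :=
        dist_iterate_le_pow_mul (by linarith) hLip k x y
    _ ≤ L ^ n * dist x y := by gcongr; linarith
    _ ≤ θ / 3 := hn

end Conjugacy

end Shadowing

/-- Theorem 4.8 (structural stability). The Hölder constant `C` is quantified before
`f`, `g`, `K_f`, `K_g`, so it depends only on `Z` (hence on `diam Z`), `θ` and `L`. -/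
theorem stmt7 {Z : Type*} [MetricSpace Z] [CompactSpace Z]
    (θ L : ℝ) (hθ : 0 < θ) (hL : 1 < L) :
    ∃ C : ℝ, 0 < C ∧
      ∀ f g : Z → Z, Continuous f → Continuous g →
        (∀ x y : Z, dist (f x) (f y) ≤ L * dist x y) →
        ∀ Kf Kg : Set Z,
          Kf.Nonempty → IsCompact Kf → Kg.Nonempty → IsCompact Kg →
          CondE f Kf θ → CondE g Kg θ →
          f '' Kf = Kf → f ⁻¹' Kf = Kf → g '' Kg = Kg → g ⁻¹' Kg = Kg →
          Metric.hausdorffDist Kf Kg < θ / 4 →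
          (∀ z : Z, dist (f z) (g z) ≤ θ / 3) →
          ∃ h : Z → Z,
            (ContinuousOn h Kf ∧ Set.MapsTo h Kf Kg ∧
              (∀ z ∈ Kf, g (h z) = h (f z)) ∧
              (∀ z ∈ Kf, dist (h z) z ≤ θ / 2)) ∧
            (∀ h' : Z → Z, ContinuousOn h' Kf → Set.MapsTo h' Kf Kg →
              (∀ z ∈ Kf, g (h' z) = h' (f z)) →
              (∀ z ∈ Kf, dist (h' z) z ≤ θ / 2) →
              Set.EqOn h' h Kf) ∧
            Set.InjOn h Kf ∧ h '' Kf = Kg ∧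
            (∀ x ∈ Kf, ∀ y ∈ Kf,
              dist (h x) (h y) ≤ C * dist x y ^ (Real.log 2 / Real.log L)) := by
  set C := (2 * θ + diam (univ : Set Z)) / (θ / 3) ^ Real.logb L 2
  refine ⟨C, by positivity, ?_⟩
  intro f g hf hg hLip Kf Kg hKf₀ hKf hKg₀ hKg hEf hEg _ hfpre _ hgpre hHaus hfg
  have hfK : MapsTo f Kf Kf := mapsTo_iff_subset_preimage.mpr hfpre.ge
  have hgK : MapsTo g Kg Kg := mapsTo_iff_subset_preimage.mpr hgpre.ge
  have hnearKg : ∀ z ∈ Kf, infDist z Kg < θ / 4 :=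
    fun z => infDist_lt_of_hausdorffDist_lt hKf.isBounded hKg.isBounded hKf₀ hKg₀ hHaus
  have hnearKf : ∀ w ∈ Kg, infDist w Kf < θ / 4 := fun w => infDist_lt_of_hausdorffDist_lt
    hKg.isBounded hKf.isBounded hKg₀ hKf₀ (by rwa [hausdorffDist_comm])
  have hnearKg' : ∀ z ∈ Kf, infDist z Kg ≤ θ / 2 := fun z hz => by linarith [hnearKg z hz]
  have hshadow : ∀ z ∈ Kf, ∃ w ∈ Kg, Shadows g (θ / 3) (f^[·] z) w := fun z hz =>
    hEg.exists_mem_shadows_orbit hg hKg hKg₀ hgpre.subset (by linarith)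
      (fun k => (hnearKg _ (hfK.iterate k hz)).trans (by linarith))
      fun y => (dist_comm _ _).trans_le (hfg y)
  choose! h hhK hh using hshadow
  have hh' : ∀ z ∈ Kf, Shadows g (θ / 2) (f^[·] z) (h z) :=
    fun z hz => (hh z hz).mono (by linarith)
  have hHolder : ∀ x ∈ Kf, ∀ y ∈ Kf, dist (h x) (h y) ≤ C * dist x y ^ Real.logb L 2 :=
    fun x hx y hy => dist_le_mul_rpow_of_shadows hθ hL hLip hEg hgK hhK hh hx hy
  refine ⟨h, ⟨continuousOn_of_dist_le_mul_rpow (Real.logb_pos hL one_lt_two) hHolder, hhK,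
    fun z => semiconj_of_shadows hEg hfK hnearKg' hh', fun z hz => hh' z hz 0⟩,
    fun h' _ _ => eqOn_of_semiconj hEg hfK hnearKg' hh', injOn_of_shadows hEf hfK hh',
    (surjOn_of_shadows hθ hf hKf hKf₀ hEf hEg hfpre.subset hfK hgK hnearKg'
      (fun w hw => (hnearKf w hw).trans (by linarith)) hfg hh').image_eq_of_mapsTo hhK,
    hHolder⟩
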